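/- Let n ≥ 2, let f : ℝ × ℝⁿ → ℝ be continuously differentiable, and define X : ℝ × ℝⁿ → ℝⁿ by Xⁱ(t,x) = xⁱ⁺¹ for i = 1,…,n−1 and Xⁿ(t,x) = f(t,x). Then the jet geometric Yang–Mills energy produced by the superior order ODE y⁽ⁿ⁾ = f(t,y,…,y⁽ⁿ⁻¹⁾) satisfies, for all (t,x), EYM(t,x) = Σ_{1 ≤ i < j ≤ n} F_{ij}(t,x)² = (1/4)[ n − 1 − 2·∂f/∂xⁿ⁻¹(t,x) + Σ_{j=1}^{n−1} (∂f/∂xʲ(t,x))² ]. -/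

import Mathlib

/-- Partial derivative of `g : ℝⁿ → ℝ` at `x` in the `j`-th coordinate direction. -/
noncomputable def pd {n : ℕ} (g : (Fin n → ℝ) → ℝ) (x : Fin n → ℝ) (j : Fin n) : ℝ :=
  fderiv ℝ g x (Pi.single j 1)

/-- The electromagnetic matrix produced by the first-order ODE system
`dxⁱ/dt = Xⁱ(t,x)`: `F_{ij}(t,x) = (1/2)(∂Xⁱ/∂xʲ - ∂Xʲ/∂xⁱ)`. -/
noncomputable def emF {n : ℕ} (X : ℝ → (Fin n → ℝ) → Fin n → ℝ)
    (t : ℝ) (x : Fin n → ℝ) (i j : Fin n) : ℝ :=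
  (1 / 2) * (pd (fun y => X t y i) x j - pd (fun y => X t y j) x i)

/-- The first-order system associated to the superior order ODE
`y⁽ⁿ⁾ = f(t, y, y', …, y⁽ⁿ⁻¹⁾)` via `x¹ = y, …, xⁿ = y⁽ⁿ⁻¹⁾` (0-based indexing):
`Xⁱ(t,x) = xⁱ⁺¹` for `i < n-1` and `Xⁿ⁻¹(t,x) = f(t,x)`. -/
def sodeX (n : ℕ) (f : ℝ → (Fin n → ℝ) → ℝ) : ℝ → (Fin n → ℝ) → Fin n → ℝ :=
  fun t x i => if h : (i : ℕ) + 1 < n then x ⟨(i : ℕ) + 1, h⟩ else f t x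

/-!
With 0-based indices, for `i < j` the only nonzero entries of `F` are `F_{i,i+1} = 1/2`, from the
shift components `Xⁱ = xⁱ⁺¹`, and `F_{i,n-1} = -(1/2) ∂ᵢf`, from the last component `Xⁿ⁻¹ = f`;
the two overlap at `(n-2, n-1)`, which produces the cross term `-2 ∂_{n-2}f`.
Splitting off the last index, the pairs among the first `n - 1` indices contribute `(n - 2)/4`
and the pairs `(i, n-1)` contribute `((1 - ∂_{n-2}f)² + ∑_{i<n-2} (∂ᵢf)²)/4`.
-/

open Finset

theorem Fin.sum_filter_fst_lt_snd_castSucc {M : Type*} [AddCommMonoid M] (m : ℕ)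
    (F : Fin (m + 1) → Fin (m + 1) → M) :
    ∑ p ∈ univ.filter (fun p : Fin (m + 1) × Fin (m + 1) => p.1 < p.2), F p.1 p.2
      = ∑ p ∈ univ.filter (fun p : Fin m × Fin m => p.1 < p.2), F p.1.castSucc p.2.castSucc
        + ∑ i : Fin m, F i.castSucc (Fin.last m) := by
  simp [sum_filter, Fintype.sum_prod_type, Fin.sum_univ_castSucc, sum_add_distrib,
    (Fin.le_last _).not_gt]

theorem Fin.sum_filter_fst_lt_snd_ite_succ_eq {R : Type*} [AddCommMonoidWithOne R] (m : ℕ) :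
    ∑ p ∈ univ.filter (fun p : Fin (m + 1) × Fin (m + 1) => p.1 < p.2),
      (if (p.1 : ℕ) + 1 = p.2 then (1 : R) else 0) = m := by
  induction m with
  | zero => simp
  | succ m ih =>
    rw [Fin.sum_filter_fst_lt_snd_castSucc (F := fun i j => if (i : ℕ) + 1 = j then (1 : R) else 0)]
    simp only [Fin.val_castSucc, Fin.val_last, ih, Nat.add_right_cancel_iff, Nat.cast_succ]
    rw [Fin.sum_univ_castSucc]
    simp [(Fin.is_lt _).ne]

theorem pd_eval {n : ℕ} (k : Fin n) (x : Fin n → ℝ) (j : Fin n) :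
    pd (fun y => y k) x j = (Pi.single j (1 : ℝ) : Fin n → ℝ) k := by
  rw [pd, show (fun y : Fin n → ℝ => y k) = (ContinuousLinearMap.proj k : (Fin n → ℝ) →L[ℝ] ℝ)
    from rfl, ContinuousLinearMap.fderiv]
  rfl

section SuperiorOrder

variable {m : ℕ} (f : ℝ → (Fin (m + 1) → ℝ) → ℝ) (t : ℝ) (x : Fin (m + 1) → ℝ)

@[simp]
theorem sodeX_castSucc (i : Fin m) : sodeX (m + 1) f t x i.castSucc = x i.succ := by
  simp [sodeX, Fin.succ]

@[simp]
theorem sodeX_last : sodeX (m + 1) f t x (Fin.last m) = f t x := by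
  simp [sodeX]

theorem emF_sodeX_castSucc_castSucc {i j : Fin m} (hij : i < j) :
    emF (sodeX (m + 1) f) t x i.castSucc j.castSucc
      = 1 / 2 * if (i : ℕ) + 1 = j then 1 else 0 := by
  have hji : (j : ℕ) + 1 ≠ i := by have := Fin.lt_def.mp hij; omega
  simp [emF, pd_eval, Pi.single_apply, Fin.ext_iff, hji]

theorem emF_sodeX_castSucc_last (i : Fin m) :
    emF (sodeX (m + 1) f) t x i.castSucc (Fin.last m)
      = 1 / 2 * ((if (i : ℕ) + 1 = m then 1 else 0) - pd (f t) x i.castSucc) := by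
  simp [emF, pd_eval, Pi.single_apply, Fin.ext_iff]

end SuperiorOrder

/-- the jet geometric Yang–Mills energy produced by the superior
order ODE `y⁽ⁿ⁾ = f(t, y, …, y⁽ⁿ⁻¹⁾)` equals
`(1/4)[n - 1 - 2 ∂f/∂xⁿ⁻¹ + ∑_{j=1}^{n-1} (∂f/∂xʲ)²]`
(1-based index `j` corresponds to the 0-based index `j - 1`; in particular the
1-based `∂f/∂xⁿ⁻¹` is the 0-based partial in direction `n - 2`). -/
theorem yang_mills_energy_of_superior_order_ode
    (n : ℕ) (hn : 2 ≤ n)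
    (f : ℝ → (Fin n → ℝ) → ℝ) :
    ∀ (t : ℝ) (x : Fin n → ℝ),
      ∑ p ∈ Finset.univ.filter (fun p : Fin n × Fin n => p.1 < p.2),
          emF (sodeX n f) t x p.1 p.2 ^ 2
        = (1 / 4) * ((n : ℝ) - 1 - 2 * pd (fun y => f t y) x ⟨n - 2, by omega⟩
            + ∑ j : Fin (n - 1),
                pd (fun y => f t y) x ⟨(j : ℕ), by omega⟩ ^ 2) := by
  intro t x
  obtain ⟨m, rfl⟩ : ∃ m, n = m + 2 := ⟨n - 2, by omega⟩
  -- `⟨m + 2 - 2, _⟩` and `Fin (m + 2 - 1)` are `(Fin.last m).castSucc` and `Fin (m + 1)` by `rfl`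
  show _ = 1 / 4 * (((m + 2 : ℕ) : ℝ) - 1 - 2 * pd (f t) x (Fin.last m).castSucc
    + ∑ j : Fin (m + 1), pd (f t) x j.castSucc ^ 2)
  have hinner : ∑ p ∈ univ.filter (fun p : Fin (m + 1) × Fin (m + 1) => p.1 < p.2),
      emF (sodeX (m + 2) f) t x p.1.castSucc p.2.castSucc ^ 2 = m / 4 := by
    rw [sum_congr rfl fun p hp => by rw [emF_sodeX_castSucc_castSucc f t x (mem_filter.mp hp).2]]
    simp only [mul_pow, ite_pow, one_pow, zero_pow two_ne_zero, ← mul_sum,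
      Fin.sum_filter_fst_lt_snd_ite_succ_eq]
    ring
  have hlast : ∑ i : Fin (m + 1), emF (sodeX (m + 2) f) t x i.castSucc (Fin.last _) ^ 2
      = ((1 - pd (f t) x (Fin.last m).castSucc) ^ 2
        + ∑ i : Fin m, pd (f t) x i.castSucc.castSucc ^ 2) / 4 := by
    simp [Fin.sum_univ_castSucc, emF_sodeX_castSucc_last, (Fin.is_lt _).ne]
    simp only [mul_pow, ← mul_sum]
    ring
  rw [Fin.sum_filter_fst_lt_snd_castSucc (F := fun i j => emF (sodeX (m + 2) f) t x i j ^ 2),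
    hinner, hlast, Fin.sum_univ_castSucc]
  push_cast
  ring
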